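/- Let $(Y,X,R)$ have joint density, with $\pi(y,x) = \Pr(R=1 \mid Y=y, X=x) \in (0,1)$ for all $(y,x)$, and define the odds $O(y,x) = \frac{1-\pi(y,x)}{\pi(y,x)}$. Then the conditional density of $Y$ given $X=x$ and $R=0$ satisfies the identity $f(y \mid X=x, R=0) = \frac{f(y \mid X=x, R=1)\, O(y,x)}{E[O(Y,X) \mid X=x, R=1]}$, provided $\Pr(R=0 \mid X=x) > 0$ and $\Pr(R=1 \mid X=x) > 0$. -/
import Mathlib


open MeasureTheory

/-- the Kim-Yu (2011) representation of `f(y ∣ X = x, R = 0)`.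
Here `x` is fixed; `fY` is the conditional density of `Y` given `X = x`,
`π y` is the propensity `Pr(R = 1 ∣ Y = y, X = x) ∈ (0,1)`, and the conditional
densities given `R = 1` and `R = 0` are obtained from Bayes' rule:
`f₁ y = π y * fY y / p₁` and `f₀ y = (1 - π y) * fY y / (1 - p₁)`, where
`p₁ = Pr(R = 1 ∣ X = x) = ∫ π y * fY y dy`. Then
`f₀ y = f₁ y * O y / E[O(Y,x) ∣ X = x, R = 1]`, where `O y = (1 - π y)/π y`. -/
theorem kim_yu_representation
    (fY : ℝ → ℝ) (hfY0 : ∀ y, 0 ≤ fY y)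
    (hfYint : Integrable fY) (hfY1 : ∫ y, fY y = 1)
    (π : ℝ → ℝ) (hπ : ∀ y, π y ∈ Set.Ioo (0 : ℝ) 1)
    (p₁ : ℝ) (hp₁ : p₁ = ∫ y, π y * fY y)
    (hp₁pos : 0 < p₁) (hp₁lt : p₁ < 1)
    (hπint : Integrable (fun y => π y * fY y))
    (f₁ f₀ O : ℝ → ℝ)
    (hf₁ : ∀ y, f₁ y = π y * fY y / p₁)
    (hf₀ : ∀ y, f₀ y = (1 - π y) * fY y / (1 - p₁))
    (hO : ∀ y, O y = (1 - π y) / π y)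
    (hOint : Integrable (fun y => O y * f₁ y))
    (hOpos : 0 < ∫ y, O y * f₁ y) :
    ∀ y, f₀ y = f₁ y * O y / (∫ z, O z * f₁ z) := by
  have hkey : (fun z => O z * f₁ z) = fun z => (fY z - π z * fY z) / p₁ := by
    funext z
    have hπz := hπ z
    have hπne : π z ≠ 0 := ne_of_gt hπz.1
    rw [hO z, hf₁ z]
    field_simp
  have hInt : ∫ z, O z * f₁ z = (1 - p₁) / p₁ := by
    rw [hkey]
    rw [show (fun z => (fY z - π z * fY z) / p₁) = fun z => (fY z - π z * fY z) * p₁⁻¹ by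
      funext z; rw [div_eq_mul_inv]]
    rw [integral_mul_const, integral_sub hfYint hπint, hfY1, ← hp₁, div_eq_mul_inv]
  intro y
  have hπy := hπ y
  have hπne : π y ≠ 0 := ne_of_gt hπy.1
  have hp₁ne : p₁ ≠ 0 := ne_of_gt hp₁pos
  have h1p : (1 : ℝ) - p₁ ≠ 0 := by linarith
  rw [hInt, hf₀ y, hf₁ y, hO y]
  field_simp
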